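/- Every $d$-dimensional polystochastic matrix of order $3$, for every $d \geq 2$, has a strictly positive permanent. -/

import Mathlib

/-- A multidimensional matrix is polystochastic if all entries are nonnegative
and the sum over every line (all coordinates fixed but one) equals 1. -/
def Polystochastic {d n : ℕ} (A : (Fin d → Fin n) → ℝ) : Prop :=
  (∀ α, 0 ≤ A α) ∧
    ∀ (α : Fin d → Fin n) (j : Fin d), ∑ x : Fin n, A (Function.update α j x) = 1

/-- The permanent of a `d`-dimensional matrix of order `n` (`d > 0`): the sum
over all tuples of permutations whose first component is the identity (i.e.
over all diagonals `(i, σ₂ i, …, σ_d i)`) of the products of the entries. -/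
def mper {d n : ℕ} (A : (Fin d → Fin n) → ℝ) (hd : 0 < d) : ℝ :=
  ∑ σ ∈ Finset.univ.filter
      (fun σ : Fin d → Equiv.Perm (Fin n) => σ ⟨0, hd⟩ = 1),
    ∏ i : Fin n, A (fun j => σ j i)

/-!
Split off the first coordinate, writing the entries as `A x β`, and suppose there is no positive
diagonal. If some fibre `x ↦ A x v` is positive everywhere, every fibre at a point opposite to `v`
(different in every coordinate) contains an entry `1`; changing one coordinate at a time, this
propagates to the fibre of `v` itself, which is absurd. If some fibre is positive exactly off `t`,
the same propagation shows that the slice `A t` is `0`/`1`-valued, hence the indicator of a set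
meeting every line once, i.e. of an affine hyperplane `μ ⬝ᵥ β = c`; a point `P` of it opposite to
`v` whose reflection `-v - P` is not on it yields a positive diagonal through `v`, `P`, `-v - P`.
Otherwise every fibre carries a single `1`, whose position is a Latin hypercube of order 3; such a
hypercube is affine, and an affine one visibly has a diagonal.
-/

open Function Finset Matrix

namespace ZMod3

theorem univ_eq {x y : ZMod 3} (h : x ≠ y) : (univ : Finset (ZMod 3)) = {x, y, -x - y} := by
  revert x y; decide

theorem neg_sub_ne_left {x y : ZMod 3} (h : x ≠ y) : -x - y ≠ x := by
  revert x y; decide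

theorem neg_sub_ne_right {x y : ZMod 3} (h : x ≠ y) : -x - y ≠ y := by
  revert x y; decide

theorem exists_ne_ne_neg_sub_eq (a : ZMod 3) : ∃ x y, x ≠ y ∧ x ≠ a ∧ y ≠ a ∧ -x - y = a := by
  revert a; decide

theorem affine_of_injective {f : ZMod 3 → ZMod 3} (hf : Injective f) :
    f 1 - f 0 ≠ 0 ∧ ∀ x, f x = f 0 + (f 1 - f 0) * x := by
  revert f; decide

theorem eq_zero_of_forall_add_mul_ne_zero {a e : ZMod 3} (h : ∀ x, a + e * x ≠ 0) : e = 0 := by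
  revert a e; decide

theorem injective_vec_neg_sub {x y : ZMod 3} (h : x ≠ y) : Injective ![x, y, -x - y] := by
  revert x y; decide

theorem sum_eq {M : Type*} [AddCommMonoid M] (f : ZMod 3 → M) {x y : ZMod 3} (h : x ≠ y) :
    ∑ z, f z = f x + f y + f (-x - y) := by
  rw [univ_eq h, sum_insert (by simp [h, (neg_sub_ne_left h).symm]),
    sum_pair (neg_sub_ne_right h).symm, add_assoc]

end ZMod3

section stdSimplex

variable {α : Type*} [Fintype α] {f : α → ℝ}

theorem exists_pos_of_mem_stdSimplex (hf : f ∈ stdSimplex ℝ α) : ∃ x, 0 < f x := by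
  by_contra! h
  have := hf.2 ▸ sum_nonpos fun x _ => h x
  norm_num at this

theorem apply_eq_zero_of_mem_stdSimplex (hf : f ∈ stdSimplex ℝ α) {x y : α} (hx : f x = 1)
    (hy : y ≠ x) : f y = 0 := by
  classical
  have := sum_le_sum_of_subset_of_nonneg (subset_univ {x, y}) fun z _ _ => hf.1 z
  rw [sum_pair hy.symm, hf.2, hx] at this
  linarith [hf.1 y]

theorem eq_of_apply_eq_one (hf : f ∈ stdSimplex ℝ α) {x y : α} (hx : f x = 1) (hy : f y = 1) :
    x = y := by
  by_contra h
  simp [apply_eq_zero_of_mem_stdSimplex hf hx (Ne.symm h)] at hy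

theorem apply_eq_one_of_forall_pos_eq (hf : f ∈ stdSimplex ℝ α) {x : α}
    (h : ∀ y, 0 < f y → y = x) : f x = 1 := by
  classical
  rw [← hf.2, sum_eq_single x (fun y _ hy => le_antisymm (not_lt.1 (mt (h y) hy)) (hf.1 y))
    (by simp)]

end stdSimplex

namespace ZMod3

variable {f : ZMod 3 → ℝ}

theorem apply_neg_sub_eq_one (hf : f ∈ stdSimplex ℝ (ZMod 3)) {x y : ZMod 3} (h : x ≠ y)
    (hx : f x = 0) (hy : f y = 0) : f (-x - y) = 1 := by
  linarith [sum_eq f h ▸ hf.2]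

theorem apply_neg_sub_eq_zero_or_one (hf : f ∈ stdSimplex ℝ (ZMod 3)) {x y : ZMod 3} (h : x ≠ y)
    (hx : f x = 0 ∨ f x = 1) (hy : f y = 0 ∨ f y = 1) : f (-x - y) = 0 ∨ f (-x - y) = 1 := by
  have hsum := sum_eq f h ▸ hf.2
  have := hf.1 (-x - y)
  rcases hx with hx | hx <;> rcases hy with hy | hy
  · right; linarith
  · left; linarith
  · left; linarith
  · linarith

theorem trichotomy_of_mem_stdSimplex (hf : f ∈ stdSimplex ℝ (ZMod 3)) :
    (∃ x, f x = 1) ∨ (∃ t, f t = 0 ∧ ∀ x, x ≠ t → 0 < f x) ∨ ∀ x, 0 < f x := by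
  by_cases hall : ∀ x, 0 < f x
  · exact .inr (.inr hall)
  obtain ⟨t, ht⟩ : ∃ t, f t = 0 := by
    push Not at hall
    obtain ⟨t, ht⟩ := hall
    exact ⟨t, le_antisymm ht (hf.1 t)⟩
  by_cases hpos : ∀ x, x ≠ t → 0 < f x
  · exact .inr (.inl ⟨t, ht, hpos⟩)
  push Not at hpos
  obtain ⟨x, hxt, hx⟩ := hpos
  exact .inl ⟨_, apply_neg_sub_eq_one hf hxt (le_antisymm hx (hf.1 x)) ht⟩

end ZMod3

section Update

variable {ι : Type*} [DecidableEq ι]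

theorem eq_of_forall_update_eq [Fintype ι] {α β : Type*} {g : (ι → α) → β}
    (hg : ∀ p j b, g (update p j b) = g p) (p q : ι → α) : g p = g q := by
  have key : ∀ s : Finset ι, g (s.piecewise q p) = g p := by
    intro s
    induction s using Finset.induction_on with
    | empty => simp
    | insert j s _ ih => rw [piecewise_insert, hg, ih]
  simpa using (key univ).symm

theorem induction_from_opposite [Fintype ι] {α : Type*} (v : ι → α) {Q : (ι → α) → Prop}
    (base : ∀ w, (∀ j, w j ≠ v j) → Q w)
    (step : ∀ w j, w j = v j → (∀ b, b ≠ v j → Q (update w j b)) → Q w) (w : ι → α) : Q w := by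
  classical
  induction hn : #{j | w j = v j} using Nat.strong_induction_on generalizing w with
  | _ n ih =>
    by_cases hw : ∀ j, w j ≠ v j
    · exact base w hw
    push Not at hw
    obtain ⟨j, hj⟩ := hw
    refine step w j hj fun b hb => ih _ ?_ _ rfl
    rw [← hn]
    refine card_lt_card ⟨fun i => ?_, fun hsub => ?_⟩
    · rcases eq_or_ne i j with rfl | hij <;> simp [*]
    · simpa [hb] using hsub (by simpa using hj : j ∈ ({j | w j = v j} : Finset ι))

theorem dotProduct_update [Fintype ι] {R : Type*} [CommRing R] (η p : ι → R) (j : ι) (b : R) :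
    η ⬝ᵥ update p j b = η ⬝ᵥ p + η j * (b - p j) := by
  have : update p j b = p + Pi.single j (b - p j) := by
    ext i
    rcases eq_or_ne i j with rfl | hij <;> simp [*]
  rw [this, dotProduct_add, dotProduct_single]

end Update

namespace ZMod3

variable {ι : Type*} [Fintype ι] [DecidableEq ι]

theorem exists_affine_of_latin {h : (ι → ZMod 3) → ZMod 3}
    (hh : ∀ p j, Injective fun b => h (update p j b)) :
    ∃ c η, (∀ j, η j ≠ 0) ∧ ∀ p, h p = c + η ⬝ᵥ p := by
  set slope : ι → (ι → ZMod 3) → ZMod 3 := fun j p => h (update p j 1) - h (update p j 0)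
  have hline : ∀ p j x, h (update p j x) = h (update p j 0) + slope j p * x := fun p j x => by
    simpa [update_idem] using (affine_of_injective (hh p j)).2 x
  have hslope : ∀ j p k b, slope j (update p k b) = slope j p := by
    intro j p k b
    rcases eq_or_ne k j with rfl | hkj
    · simp [slope, update_idem]
    rcases eq_or_ne b (p k) with rfl | hb
    · rw [update_eq_self]
    -- parallel `j`-lines differing in coordinate `k` never agree, so their difference, affine in
    -- the position on the line, has slope zero
    rw [← sub_eq_zero]
    refine eq_zero_of_forall_add_mul_ne_zero
      (a := h (update (update p k b) j 0) - h (update p j 0)) fun x h0 => ?_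
    have hne : h (update (update p j x) k b) ≠ h (update (update p j x) k (p k)) :=
      fun heq => hb (hh _ k heq)
    rw [← update_comm hkj, ← update_comm hkj, update_eq_self, hline (update p k b) j x,
      hline p j x] at hne
    exact hne (by linear_combination h0)
  set η : ι → ZMod 3 := fun j => slope j 0
  have hη : ∀ j p, slope j p = η j := fun j p => eq_of_forall_update_eq (hslope j) p 0
  have hinv : ∀ p j b, h (update p j b) - η ⬝ᵥ update p j b = h p - η ⬝ᵥ p := by
    intro p j b
    have hp := hline p j (p j)
    rw [update_eq_self] at hp
    rw [hline, dotProduct_update, hp, hη]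
    ring
  refine ⟨h 0, η, fun j => (affine_of_injective (hh 0 j)).1, fun p => ?_⟩
  have := eq_of_forall_update_eq (g := fun p => h p - η ⬝ᵥ p) hinv p 0
  simp only [dotProduct_zero, sub_zero] at this
  rw [← this]
  ring

theorem exists_dotProduct_eq [Nonempty ι] {μ : ι → ZMod 3} (hμ : ∀ j, μ j ≠ 0)
    {e : ZMod 3} (he : e ≠ 0) : ∃ δ : ι → ZMod 3, (∀ j, δ j ≠ 0) ∧ μ ⬝ᵥ δ = e := by
  obtain ⟨δ, hδ, hs⟩ : ∃ δ : ι → ZMod 3, (∀ j, δ j ≠ 0) ∧ μ ⬝ᵥ δ ≠ 0 := by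
    inhabit ι
    set δ₀ : ι → ZMod 3 := fun j => (μ j)⁻¹
    have hδ₀ : ∀ j, δ₀ j ≠ 0 := fun j => inv_ne_zero (hμ j)
    by_cases h₀ : μ ⬝ᵥ δ₀ = 0
    · refine ⟨update δ₀ default (-δ₀ default), fun j => ?_, ?_⟩
      · rcases eq_or_ne j default with rfl | hj <;> simp [*]
      · rw [dotProduct_update, h₀]
        simp only [δ₀, mul_sub, mul_neg, mul_inv_cancel₀ (hμ default)]
        decide
    · exact ⟨δ₀, hδ₀, h₀⟩
  refine ⟨(e * (μ ⬝ᵥ δ)⁻¹) • δ, fun j => by simp [he, hs, hδ j], ?_⟩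
  rw [dotProduct_smul, smul_eq_mul, inv_mul_cancel_right₀ hs]

theorem exists_dotProduct_iff_of_latin [Nonempty ι] {S : Set (ι → ZMod 3)}
    (hS : ∀ p j, ∃! b, update p j b ∈ S) :
    ∃ c μ, (∀ j, μ j ≠ 0) ∧ ∀ p, p ∈ S ↔ μ ⬝ᵥ p = c := by
  obtain ⟨j₁⟩ := ‹Nonempty ι›
  choose g hgS hg using fun p => hS p j₁
  have hg_update : ∀ p b, g (update p j₁ b) = g p := fun p b =>
    (hg (update p j₁ b) _ (by simpa using hgS p)).symm
  have hmem : ∀ p, p ∈ S ↔ p j₁ = g p := fun p =>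
    ⟨fun h => hg p _ (by simpa using h), fun h => by simpa [← h] using hgS p⟩
  -- `S` is the graph `p j₁ = g p`, and `g p + p j₁` is a Latin hypercube
  have hlatin : ∀ p j, Injective fun b => g (update p j b) + update p j b j₁ := by
    intro p j b₁ b₂ hb
    rcases eq_or_ne j j₁ with rfl | hj
    · simpa [hg_update] using hb
    simp only [update_of_ne hj.symm, add_left_inj] at hb
    have h₁ := hgS (update p j b₁)
    have h₂ := hgS (update p j b₂)
    rw [hb, update_comm hj] at h₁
    rw [update_comm hj] at h₂
    exact (hS _ j).unique h₁ h₂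
  obtain ⟨c, η, hη, hG⟩ := exists_affine_of_latin (h := fun p => g p + p j₁) hlatin
  have hη₁ : η j₁ = 1 := by
    have h₁ := hG (update 0 j₁ 1)
    have h₀ := hG 0
    simp only [hg_update, update_self, dotProduct_update, Pi.zero_apply] at h₁ h₀
    linear_combination h₀ - h₁
  refine ⟨-c, η - Pi.single j₁ 2, fun j => ?_, fun p => ?_⟩
  · rcases eq_or_ne j j₁ with rfl | hj
    · simp only [Pi.sub_apply, Pi.single_eq_same, hη₁]
      decide
    · simpa [hj] using hη j
  · rw [hmem, sub_dotProduct, single_dotProduct]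
    have := hG p
    constructor <;> intro h <;> linear_combination -this - h

end ZMod3

section Split

variable {ι : Type*}

/-- Three values in `ZMod 3` are pairwise distinct iff they are `x`, `y`, `-x - y` with `x ≠ y`,
so a diagonal is determined by two of its points. -/
def HasPosDiagonal (A : ZMod 3 → (ι → ZMod 3) → ℝ) : Prop :=
  ∃ x y β γ, x ≠ y ∧ (∀ j, β j ≠ γ j) ∧ 0 < A x β ∧ 0 < A y γ ∧ 0 < A (-x - y) (-β - γ)

variable {A : ZMod 3 → (ι → ZMod 3) → ℝ}

theorem not_pos_of_not_hasPosDiagonal (h : ¬HasPosDiagonal A) {v s : ι → ZMod 3}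
    (hs : ∀ j, s j ≠ v j) {y c : ZMod 3} (hyc : y ≠ c) (hy : 0 < A y s) (hc : 0 < A c (-v - s)) :
    ¬0 < A (-y - c) v := fun hv =>
  h ⟨y, c, s, -v - s, hyc, fun j => (ZMod3.neg_sub_ne_right (hs j).symm).symm, hy, hc,
    by rwa [show -s - (-v - s) = v by abel]⟩

variable [DecidableEq ι]

/-- `A x β` is the entry at the index `(x, β₁, …, β_m)`: the first coordinate is split off. -/
structure SplitPolystochastic (A : ZMod 3 → (ι → ZMod 3) → ℝ) : Prop where
  fibre : ∀ β, (fun x => A x β) ∈ stdSimplex ℝ (ZMod 3)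
  line : ∀ x β j, (fun b => A x (update β j b)) ∈ stdSimplex ℝ (ZMod 3)

namespace SplitPolystochastic

theorem exists_eq_one_of_update (hA : SplitPolystochastic A) {w : ι → ZMod 3} {j : ι}
    (h : ∀ b, b ≠ w j → ∃ c, A c (update w j b) = 1) : ∃ c, A c w = 1 := by
  obtain ⟨b₁, b₂, hb, hb₁, hb₂, hbw⟩ := ZMod3.exists_ne_ne_neg_sub_eq (w j)
  obtain ⟨c₁, hc₁⟩ := h b₁ hb₁
  obtain ⟨c₂, hc₂⟩ := h b₂ hb₂
  have hc : c₁ ≠ c₂ := by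
    rintro rfl
    exact hb (eq_of_apply_eq_one (hA.line c₁ w j) hc₁ hc₂)
  have hzero : ∀ {c b}, A c (update w j b) = 1 → b ≠ w j → A c w = 0 := fun hcb hb => by
    simpa using apply_eq_zero_of_mem_stdSimplex (hA.line _ w j) hcb hb.symm
  exact ⟨_, ZMod3.apply_neg_sub_eq_one (hA.fibre w) hc (hzero hc₁ hb₁) (hzero hc₂ hb₂)⟩

theorem eq_zero_or_one_of_update (hA : SplitPolystochastic A) {t : ZMod 3} {w : ι → ZMod 3}
    {j : ι} (h : ∀ b, b ≠ w j → A t (update w j b) = 0 ∨ A t (update w j b) = 1) :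
    A t w = 0 ∨ A t w = 1 := by
  obtain ⟨b₁, b₂, hb, hb₁, hb₂, hbw⟩ := ZMod3.exists_ne_ne_neg_sub_eq (w j)
  simpa [hbw] using
    ZMod3.apply_neg_sub_eq_zero_or_one (hA.line t w j) hb (h b₁ hb₁) (h b₂ hb₂)

variable [Fintype ι]

theorem hasPosDiagonal_of_forall_pos (hA : SplitPolystochastic A) {v : ι → ZMod 3}
    (hv : ∀ x, 0 < A x v) : HasPosDiagonal A := by
  by_contra hdiag
  have hopp : ∀ s, (∀ j, s j ≠ v j) → ∃ c, A c s = 1 := by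
    intro s hs
    obtain ⟨c, hc⟩ := exists_pos_of_mem_stdSimplex (hA.fibre (-v - s))
    refine ⟨c, apply_eq_one_of_forall_pos_eq (hA.fibre s) fun y hy => ?_⟩
    by_contra hyc
    exact not_pos_of_not_hasPosDiagonal hdiag hs hyc hy hc (hv _)
  obtain ⟨c, hc⟩ := induction_from_opposite v hopp
    (fun w j hj h => hA.exists_eq_one_of_update (hj ▸ h)) v
  obtain ⟨x, hx⟩ := exists_ne c
  exact (hv x).ne' (apply_eq_zero_of_mem_stdSimplex (hA.fibre v) hc hx)

theorem hasPosDiagonal_of_pos_of_ne [Nonempty ι] (hA : SplitPolystochastic A)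
    {v : ι → ZMod 3} {t : ZMod 3} (ht : A t v = 0) (hv : ∀ x, x ≠ t → 0 < A x v) :
    HasPosDiagonal A := by
  by_contra hdiag
  -- if `y` or `c` is `t`, the third height `-y - c` is not `t`, where the fibre of `v` is positive
  have key : ∀ s, (∀ j, s j ≠ v j) → ∀ y c, y ≠ c → (y = t ∨ c = t) → 0 < A y s →
      ¬0 < A c (-v - s) := by
    intro s hs y c hyc hyct hy hc
    refine not_pos_of_not_hasPosDiagonal hdiag hs hyc hy hc (hv _ ?_)
    rcases hyct with rfl | rfl
    · exact ZMod3.neg_sub_ne_left hyc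
    · exact ZMod3.neg_sub_ne_right hyc
  have hopp : ∀ s, (∀ j, s j ≠ v j) → A t s = 0 ∨ A t s = 1 := by
    intro s hs
    rcases ((hA.fibre s).1 t).eq_or_lt with h | h
    · exact .inl h.symm
    have hr : A t (-v - s) = 1 := apply_eq_one_of_forall_pos_eq (hA.fibre _) fun c hc => by
      by_contra hct
      exact key s hs t c (Ne.symm hct) (.inl rfl) h hc
    exact .inr (apply_eq_one_of_forall_pos_eq (hA.fibre s) fun y hy => by
      by_contra hyt
      exact key s hs y t hyt (.inr rfl) hy (hr ▸ one_pos))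
  have h01 : ∀ w, A t w = 0 ∨ A t w = 1 :=
    induction_from_opposite v hopp fun w j hj h => hA.eq_zero_or_one_of_update (hj ▸ h)
  obtain ⟨c, μ, hμ, hS⟩ := ZMod3.exists_dotProduct_iff_of_latin (S := {β | A t β = 1})
    fun p j => by
      obtain ⟨b, hb⟩ := exists_pos_of_mem_stdSimplex (hA.line t p j)
      exact ⟨b, (h01 _).resolve_left hb.ne', fun b' hb' =>
        eq_of_apply_eq_one (hA.line t p j) hb' ((h01 _).resolve_left hb.ne')⟩
  have hvc : μ ⬝ᵥ v ≠ c := fun h => one_ne_zero ((hS v).2 h ▸ ht : (1 : ℝ) = 0)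
  obtain ⟨δ, hδ, hμδ⟩ := ZMod3.exists_dotProduct_eq hμ (sub_ne_zero.2 hvc.symm)
  set P := v + δ
  have hP : A t P = 1 := (hS P).2 (by rw [dotProduct_add, hμδ]; ring)
  have hR : A t (-v - P) = 0 := (h01 _).resolve_right fun h => by
    have := (hS _).1 h
    rw [dotProduct_sub, dotProduct_neg, (hS P).1 hP] at this
    exact ZMod3.neg_sub_ne_right hvc this
  obtain ⟨c', hc'⟩ := exists_pos_of_mem_stdSimplex (hA.fibre (-v - P))
  exact key P (fun j => by simpa [P] using hδ j) t c' (fun h => by simp [← h, hR] at hc')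
    (.inl rfl) (hP ▸ one_pos) hc'

theorem hasPosDiagonal_of_forall_exists_eq_one [Nonempty ι] (hA : SplitPolystochastic A)
    (h : ∀ β, ∃ x, A x β = 1) : HasPosDiagonal A := by
  choose φ hφ using h
  have hlatin : ∀ p j, Injective fun b => φ (update p j b) := fun p j b₁ b₂ hb =>
    eq_of_apply_eq_one (hA.line (φ (update p j b₁)) p j) (hφ _)
      (by simpa [hb] using hφ (update p j b₂))
  obtain ⟨c, η, hη, hφη⟩ := ZMod3.exists_affine_of_latin hlatin
  obtain ⟨δ, hδ, hηδ⟩ := ZMod3.exists_dotProduct_eq hη one_ne_zero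
  have hthird : -φ 0 - φ δ = φ (-0 - δ) := by
    have h3 : (3 : ZMod 3) = 0 := rfl
    rw [hφη, hφη, hφη, dotProduct_sub, dotProduct_neg, hηδ, dotProduct_zero]
    linear_combination (-c) * h3
  refine ⟨φ 0, φ δ, 0, δ, ?_, fun j => (hδ j).symm, by simp [hφ], by simp [hφ], ?_⟩
  · rw [hφη, hφη, hηδ, dotProduct_zero]
    simp
  · rw [hthird, hφ]
    exact one_pos

theorem hasPosDiagonal [Nonempty ι] (hA : SplitPolystochastic A) : HasPosDiagonal A := by
  by_contra hdiag
  refine hdiag (hA.hasPosDiagonal_of_forall_exists_eq_one fun β => ?_)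
  rcases ZMod3.trichotomy_of_mem_stdSimplex (hA.fibre β) with h | ⟨t, ht, hpos⟩ | hpos
  · exact h
  · exact (hdiag (hA.hasPosDiagonal_of_pos_of_ne ht hpos)).elim
  · exact (hdiag (hA.hasPosDiagonal_of_forall_pos hpos)).elim

end SplitPolystochastic

end Split

theorem Polystochastic.splitPolystochastic {m : ℕ} {A : (Fin (m + 1) → Fin 3) → ℝ}
    (hA : Polystochastic A) :
    SplitPolystochastic fun (x : Fin 3) (β : Fin m → Fin 3) => A (Fin.cons x β) := by
  -- `ZMod 3` is definitionally `Fin 3`; the `show`s restate the goals on the `Fin 3` side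
  refine ⟨fun (β : Fin m → Fin 3) => ⟨fun x => hA.1 _, ?_⟩,
    fun (x : Fin 3) (β : Fin m → Fin 3) j => ⟨fun b => hA.1 _, ?_⟩⟩
  · show ∑ x : Fin 3, A (Fin.cons x β) = 1
    simpa only [Fin.update_cons_zero] using hA.2 (Fin.cons 0 β) 0
  · show ∑ b : Fin 3, A (Fin.cons x (update β j b)) = 1
    simpa only [Fin.cons_update] using hA.2 (Fin.cons x β) j.succ

theorem HasPosDiagonal.exists_cons {m : ℕ} {A : (Fin (m + 1) → Fin 3) → ℝ}
    (h : HasPosDiagonal fun (x : Fin 3) (β : Fin m → Fin 3) => A (Fin.cons x β)) :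
    ∃ F : Fin 3 → Fin (m + 1) → Fin 3, (∀ j, Injective fun k => F k j) ∧ ∀ k, 0 < A (F k) := by
  obtain ⟨x, y, β, γ, hxy, hβγ, h₁, h₂, h₃⟩ := h
  refine ⟨fun k => Fin.cons (![x, y, -x - y] k) fun i => ![β i, γ i, -β i - γ i] k,
    fun j => ?_, fun k => ?_⟩
  · cases j using Fin.cases with
    | zero => exact ZMod3.injective_vec_neg_sub hxy
    | succ i => exact ZMod3.injective_vec_neg_sub (hβγ i)
  · fin_cases k
    · exact h₁
    · exact h₂
    · exact h₃

theorem mper_pos_of_diagonal {d n : ℕ} {A : (Fin d → Fin n) → ℝ} (hd : 0 < d)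
    (hA : ∀ α, 0 ≤ A α) {F : Fin n → Fin d → Fin n} (hF : ∀ j, Injective fun k => F k j)
    (hpos : ∀ k, 0 < A (F k)) : 0 < mper A hd := by
  set π : Fin d → Equiv.Perm (Fin n) := fun j => Equiv.ofBijective _ (hF j).bijective_of_finite
  refine sum_pos' (fun σ _ => prod_nonneg fun i _ => hA _)
    ⟨fun j => π j * (π ⟨0, hd⟩)⁻¹, by simp, prod_pos fun i _ => hpos _⟩

/-- Every `d`-dimensional polystochastic matrix of order 3 (`d ≥ 2`) has a
strictly positive permanent. -/
theorem polystochastic_order3_perm_pos (d : ℕ) (hd : 2 ≤ d)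
    (A : (Fin d → Fin 3) → ℝ) (hA : Polystochastic A) :
    0 < mper A (by omega) := by
  obtain ⟨m, rfl⟩ : ∃ m, d = m + 1 := ⟨d - 1, by omega⟩
  have : Nonempty (Fin m) := ⟨⟨0, by omega⟩⟩
  obtain ⟨F, hF, hpos⟩ := hA.splitPolystochastic.hasPosDiagonal.exists_cons
  exact mper_pos_of_diagonal _ hA.1 hF hpos
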